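/- arXiv:1112.1660 — 6 statements merged into one kernel-verified Lean document; each statement's English description precedes it below -/
import Mathlib

section
/- Let n = N-1 and let A be the n×n integer matrix whose i-th row, for i = 1, ..., n, is a_i = (1, 2, ..., i-1, i+1, ..., n, 1), i.e., the increasing sequence 1, 2, ..., n with the entry i omitted, followed by a final entry 1; thus a_1 = (2,3,...,n,1), a_2 = (1,3,4,...,n,1), ..., a_n = (1,2,...,n-1,1). Then det A = 1. -/
/-- The `n × n` integer matrix whose `i`-th row (0-indexed) is the increasing
sequence `1, 2, ..., n` with the value `i+1` deleted and a `1` appended: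
`a_1 = (2,3,...,n,1)`, `a_2 = (1,3,4,...,n,1)`, ..., `a_n = (1,2,...,n-1,1)`.
Its determinant equals `1`. -/
theorem stmt0 (n : ℕ) (hn : 1 ≤ n) :
    Matrix.det (fun i j : Fin n =>
      if (j : ℕ) + 1 < n then
        (if (j : ℕ) < (i : ℕ) then ((j : ℕ) + 1 : ℤ) else ((j : ℕ) + 2 : ℤ))
      else (1 : ℤ)) = 1 := by
  rcases n with _ | m
  · omega
  set A : Matrix (Fin (m+1)) (Fin (m+1)) ℤ := fun i j =>
    if (j : ℕ) + 1 < m+1 then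
      (if (j : ℕ) < (i : ℕ) then ((j : ℕ) + 1 : ℤ) else ((j : ℕ) + 2 : ℤ))
    else (1 : ℤ) with hA
  set B : Matrix (Fin (m+1)) (Fin (m+1)) ℤ := fun i j =>
    if (i : ℕ) = 0 then A 0 j else (if (j : ℕ) + 1 = (i : ℕ) then -1 else 0) with hB
  have hAB : A.det = B.det := by
    apply Matrix.det_eq_of_forall_row_eq_smul_add_pred (fun _ => (1 : ℤ))
    · intro j; simp [hB]
    · intro i j
      simp only [hA, hB, Fin.val_succ, Fin.coe_castSucc, one_mul]
      rw [if_neg (Nat.succ_ne_zero (i : ℕ))]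
      split_ifs <;> push_cast <;> omega
  -- the row-rotated version of B is lower triangular
  have hT : (B.submatrix (finRotate (m+1)) id).det = (-1 : ℤ) ^ m := by
    rw [Matrix.det_of_lowerTriangular]
    · have hdiag : ∀ i : Fin (m+1),
          B.submatrix (finRotate (m+1)) id i i = if (i : ℕ) < m then -1 else 1 := by
        intro i
        rcases lt_or_eq_of_le (Nat.lt_succ_iff.mp i.isLt) with h | h
        · have hr : ((finRotate (m+1) i : Fin (m+1)) : ℕ) = (i : ℕ) + 1 := by
            rw [finRotate_succ_apply, Fin.val_add_one_of_lt]
            exact Fin.lt_last_iff_ne_last.mpr (by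
              intro hlast; rw [hlast] at h; simp at h)
          simp only [Matrix.submatrix_apply, id]; simp only [hB, hr]
          simp [h]
        · have hr : finRotate (m+1) i = 0 := by
            rw [finRotate_succ_apply]
            have : i = Fin.last m := by ext; simpa using h
            rw [this]
            simp [Fin.last_add_one]
          simp only [Matrix.submatrix_apply, id]; simp only [hr, hB]
          simp [hA, h]
      rw [Finset.prod_congr rfl (fun i _ => hdiag i)]
      rw [Fin.prod_univ_castSucc]
      simp
    · intro i j hij
      simp only [Matrix.submatrix_apply, id]; simp only [hB]
      have hij' : (i : ℕ) < (j : ℕ) := hij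
      have hi : (i : ℕ) < m := lt_of_lt_of_le hij' (Nat.lt_succ_iff.mp j.isLt)
      have hr : ((finRotate (m+1) i : Fin (m+1)) : ℕ) = (i : ℕ) + 1 := by
        rw [finRotate_succ_apply, Fin.val_add_one_of_lt]
        exact Fin.lt_last_iff_ne_last.mpr (by
          intro hlast; rw [hlast] at hi; simp at hi)
      rw [hr]
      have : ¬ ((j : ℕ) + 1 = (i : ℕ) + 1) := by omega
      simp [this, show ¬ ((j : ℕ) = (i : ℕ)) by omega]
  have hperm := Matrix.det_permute (finRotate (m+1)) B
  rw [hT, sign_finRotate] at hperm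
  have hBdet : B.det = 1 := by
    have hcast : (((-1 : ℤˣ) ^ m : ℤˣ) : ℤ) = (-1 : ℤ) ^ m := by push_cast; ring
    simp only [Nat.add_sub_cancel, Int.cast_id, hcast] at hperm
    have h1 : (-1 : ℤ) ^ m * B.det = (-1 : ℤ) ^ m * 1 := by
      rw [mul_one]; exact hperm.symm
    exact mul_left_cancel₀ (pow_ne_zero m (by norm_num)) h1
  rw [hAB, hBdet]
end

section
/- Let X be an n×n integer matrix each of whose rows, after some permutation of entries and possibly an overall sign change, is one of the following nine types (with remaining entries zero): (1,0,...), (2,0,...), (1,1,0,...), (1,−1,0,...), (2,−1,0,...), (1,1,−1,0,...), (2,−2,0,...), (2,−1,−1,0,...), (1,1,−1,−1,0,...). Then |det X| ≤ 2^n. -/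
/-- The nine admissible patterns (up to permutation and overall sign) for the
nonzero entries of a row. -/
def patterns : List (List ℤ) :=
  [[1], [2], [1, 1], [1, -1], [2, -1], [1, 1, -1], [2, -2], [2, -1, -1],
    [1, 1, -1, -1]]

/-- A vector in `ℤ^n` is admissible if, after a permutation of its entries and
possibly a global sign change, it coincides with one of the nine patterns
padded by zeros. -/
def Admissible {n : ℕ} (r : Fin n → ℤ) : Prop :=
  ∃ l ∈ patterns, ∃ σ : Equiv.Perm (Fin n), ∃ ε : ℤ, (ε = 1 ∨ ε = -1) ∧
    ∀ j : Fin n, ε * r (σ j) = l.getD (j : ℕ) 0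

/-- A "simple" vector: zero, `±e_j`, or `e_j - e_k`. Matrices with simple rows
are totally unimodular (network matrices). -/
def Simple {n : ℕ} (v : Fin n → ℤ) : Prop :=
  v = 0 ∨ (∃ j, v = Pi.single j 1) ∨ (∃ j, v = Pi.single j (-1)) ∨
    (∃ j k, j ≠ k ∧ v = Pi.single j 1 + Pi.single k (-1))

lemma comp_single {m n : ℕ} {f : Fin m → Fin n} (hf : Function.Injective f)
    (a : Fin n) (c : ℤ) :
    (∃ a₀, f a₀ = a ∧ Pi.single a c ∘ f = Pi.single a₀ c) ∨
      (Pi.single a c ∘ f = 0) := by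
  by_cases h : ∃ a₀, f a₀ = a
  · obtain ⟨a₀, rfl⟩ := h
    exact Or.inl ⟨a₀, rfl, funext fun k => by simp [Pi.single_apply, hf.eq_iff]⟩
  · push_neg at h
    refine Or.inr (funext fun k => ?_)
    simp [Pi.single_apply, h k]

lemma Simple.comp {m n : ℕ} {f : Fin m → Fin n} (hf : Function.Injective f)
    {v : Fin n → ℤ} (hv : Simple v) : Simple (v ∘ f) := by
  rcases hv with rfl | ⟨j, rfl⟩ | ⟨j, rfl⟩ | ⟨j, k, hjk, rfl⟩
  · exact Or.inl rfl
  · rcases comp_single hf j 1 with ⟨a₀, _, h⟩ | h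
    · exact Or.inr (Or.inl ⟨a₀, h⟩)
    · exact Or.inl h
  · rcases comp_single hf j (-1) with ⟨a₀, _, h⟩ | h
    · exact Or.inr (Or.inr (Or.inl ⟨a₀, h⟩))
    · exact Or.inl h
  · have hsplit : (Pi.single j (1:ℤ) + Pi.single k (-1:ℤ)) ∘ f
        = Pi.single j (1:ℤ) ∘ f + Pi.single k (-1:ℤ) ∘ f := rfl
    rw [hsplit]
    rcases comp_single hf j 1 with ⟨a₀, ha₀, h1⟩ | h1 <;>
      rcases comp_single hf k (-1) with ⟨b₀, hb₀, h2⟩ | h2 <;> rw [h1, h2]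
    · refine Or.inr (Or.inr (Or.inr ⟨a₀, b₀, ?_, rfl⟩))
      intro e
      exact hjk (by rw [← ha₀, ← hb₀, e])
    · exact Or.inr (Or.inl ⟨a₀, by simp⟩)
    · exact Or.inr (Or.inr (Or.inl ⟨b₀, by simp⟩))
    · exact Or.inl (by simp)

lemma tu_det : ∀ (n : ℕ) (M : Matrix (Fin n) (Fin n) ℤ),
    (∀ i, Simple (M i)) → |M.det| ≤ 1 := by
  intro n
  induction n with
  | zero => intro M _; simp [Matrix.det_fin_zero]
  | succ k ih =>
    intro M hM
    by_cases h1 : ∃ i j c, (c = (1:ℤ) ∨ c = -1) ∧ M i = Pi.single j c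
    · obtain ⟨i, j, c, hc, hrow⟩ := h1
      rw [Matrix.det_succ_row M i]
      rw [Finset.sum_eq_single j (fun b _ hb => by
        rw [hrow]
        simp [Pi.single_apply, hb]) (fun h => absurd (Finset.mem_univ j) h)]
      have hsub : |Matrix.det (M.submatrix i.succAbove j.succAbove)| ≤ 1 := by
        refine ih _ fun i' => ?_
        exact Simple.comp (Fin.succAbove_right_injective) (hM (i.succAbove i'))
      have h3 : M i j = c := by rw [hrow]; simp
      rw [abs_mul, abs_mul, h3]
      have h4 : |((-1:ℤ)) ^ ((i:ℕ) + (j:ℕ))| = 1 := by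
        rw [abs_pow]; simp
      have hc1 : |c| = 1 := by rcases hc with rfl | rfl <;> simp
      rw [h4, one_mul, hc1, one_mul]
      exact hsub
    · by_cases h0 : ∃ i, M i = 0
      · obtain ⟨i, hi⟩ := h0
        rw [Matrix.det_eq_zero_of_row_eq_zero i (fun j => by rw [hi]; rfl)]
        simp
      · -- every row is a pair e_j - e_k, so row sums vanish
        have hpair : ∀ i, ∃ j k, j ≠ k ∧
            M i = Pi.single j (1:ℤ) + Pi.single k (-1:ℤ) := by
          intro i
          rcases hM i with h | ⟨j, h⟩ | ⟨j, h⟩ | h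
          · exact absurd ⟨i, h⟩ h0
          · exact absurd ⟨i, j, 1, Or.inl rfl, h⟩ h1
          · exact absurd ⟨i, j, -1, Or.inr rfl, h⟩ h1
          · exact h
        have hdet : M.det = 0 := by
          rw [← Matrix.exists_mulVec_eq_zero_iff]
          refine ⟨fun _ => 1, ?_, ?_⟩
          · intro h
            simpa using congr_fun h 0
          · funext i
            obtain ⟨j, k, hjk, hrow⟩ := hpair i
            simp only [Matrix.mulVec, dotProduct, mul_one, hrow,
              Pi.add_apply, Pi.zero_apply]
            rw [Finset.sum_add_distrib]
            simp [Finset.sum_pi_single']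
        rw [hdet]
        simp

def Evec {n : ℕ} (σ : Equiv.Perm (Fin n)) (ε : ℤ) (p : ℕ) : Fin n → ℤ :=
  fun m => ε * (if ((σ.symm m : Fin n) : ℕ) = p then 1 else 0)

/-- `ε·(e_p - e_q)` transported by `σ` (missing coordinates dropped). -/
def Dvec {n : ℕ} (σ : Equiv.Perm (Fin n)) (ε : ℤ) (p q : ℕ) : Fin n → ℤ :=
  fun m => ε * (if ((σ.symm m : Fin n) : ℕ) = p then 1
    else if ((σ.symm m : Fin n) : ℕ) = q then -1 else 0)

lemma symm_eq_iff {n : ℕ} (σ : Equiv.Perm (Fin n)) {p : ℕ} (hp : p < n)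
    (m : Fin n) : ((σ.symm m : Fin n) : ℕ) = p ↔ m = σ ⟨p, hp⟩ := by
  constructor
  · intro h
    have h2 : σ.symm m = ⟨p, hp⟩ := Fin.ext h
    rw [← h2, Equiv.apply_symm_apply]
  · intro h
    rw [h, Equiv.symm_apply_apply]

lemma simple_Evec {n : ℕ} (σ : Equiv.Perm (Fin n)) {ε : ℤ}
    (hε : ε = 1 ∨ ε = -1) (p : ℕ) : Simple (Evec σ ε p) := by
  by_cases hp : p < n
  · have he : Evec σ ε p = Pi.single (σ ⟨p, hp⟩) ε := by
      funext m
      rw [Pi.single_apply]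
      by_cases h : ((σ.symm m : Fin n) : ℕ) = p
      · simp [Evec, h, (symm_eq_iff σ hp m).mp h]
      · have h2 : m ≠ σ ⟨p, hp⟩ := fun e => h ((symm_eq_iff σ hp m).mpr e)
        simp [Evec, h, h2]
    rw [he]
    rcases hε with rfl | rfl
    · exact Or.inr (Or.inl ⟨_, rfl⟩)
    · exact Or.inr (Or.inr (Or.inl ⟨_, rfl⟩))
  · have he : Evec σ ε p = 0 := by
      funext m
      have h : ((σ.symm m : Fin n) : ℕ) ≠ p := fun h => hp (h ▸ (σ.symm m).isLt)
      simp [Evec, h]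
    exact Or.inl he

lemma simple_Dvec {n : ℕ} (σ : Equiv.Perm (Fin n)) {ε : ℤ}
    (hε : ε = 1 ∨ ε = -1) {p q : ℕ} (hpq : p ≠ q) : Simple (Dvec σ ε p q) := by
  by_cases hp : p < n
  · by_cases hq : q < n
    · have he : Dvec σ ε p q = Pi.single (σ ⟨p, hp⟩) ε + Pi.single (σ ⟨q, hq⟩) (-ε) := by
        funext m
        simp only [Pi.add_apply, Pi.single_apply]
        by_cases h1 : ((σ.symm m : Fin n) : ℕ) = p
        · have e1 := (symm_eq_iff σ hp m).mp h1
          have e2 : m ≠ σ ⟨q, hq⟩ := fun e =>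
            hpq (by rw [← h1, (symm_eq_iff σ hq m).mpr e])
          simp [Dvec, h1, e1, e2, hpq]
        · have e1 : m ≠ σ ⟨p, hp⟩ := fun e => h1 ((symm_eq_iff σ hp m).mpr e)
          by_cases h2 : ((σ.symm m : Fin n) : ℕ) = q
          · simp [Dvec, h1, h2, (symm_eq_iff σ hq m).mp h2, hpq.symm]
          · have e2 : m ≠ σ ⟨q, hq⟩ := fun e => h2 ((symm_eq_iff σ hq m).mpr e)
            simp [Dvec, h1, h2, e1, e2]
      have hne : σ ⟨p, hp⟩ ≠ σ ⟨q, hq⟩ := by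
        simp only [ne_eq, EmbeddingLike.apply_eq_iff_eq, Fin.mk.injEq]
        exact hpq
      rw [he]
      rcases hε with rfl | rfl
      · exact Or.inr (Or.inr (Or.inr ⟨_, _, hne, rfl⟩))
      · refine Or.inr (Or.inr (Or.inr ⟨σ ⟨q, hq⟩, σ ⟨p, hp⟩, hne.symm, ?_⟩))
        rw [add_comm]
        norm_num
    · have he : Dvec σ ε p q = Pi.single (σ ⟨p, hp⟩) ε := by
        funext m
        rw [Pi.single_apply]
        have h2 : ((σ.symm m : Fin n) : ℕ) ≠ q := fun h => hq (h ▸ (σ.symm m).isLt)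
        by_cases h1 : ((σ.symm m : Fin n) : ℕ) = p
        · simp [Dvec, h1, (symm_eq_iff σ hp m).mp h1]
        · have e1 : m ≠ σ ⟨p, hp⟩ := fun e => h1 ((symm_eq_iff σ hp m).mpr e)
          simp [Dvec, h1, h2, e1]
      rw [he]
      rcases hε with rfl | rfl
      · exact Or.inr (Or.inl ⟨_, rfl⟩)
      · exact Or.inr (Or.inr (Or.inl ⟨_, rfl⟩))
  · have h1 : ∀ m : Fin n, ((σ.symm m : Fin n) : ℕ) ≠ p :=
      fun m h => hp (h ▸ (σ.symm m).isLt)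
    by_cases hq : q < n
    · have he : Dvec σ ε p q = Pi.single (σ ⟨q, hq⟩) (-ε) := by
        funext m
        rw [Pi.single_apply]
        by_cases h2 : ((σ.symm m : Fin n) : ℕ) = q
        · simp [Dvec, h1 m, h2, (symm_eq_iff σ hq m).mp h2, hpq.symm]
        · have e2 : m ≠ σ ⟨q, hq⟩ := fun e => h2 ((symm_eq_iff σ hq m).mpr e)
          simp [Dvec, h1 m, h2, e2]
      rcases hε with rfl | rfl
      · rw [he]
        exact Or.inr (Or.inr (Or.inl ⟨_, rfl⟩))
      · norm_num at he
        rw [he]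
        exact Or.inr (Or.inl ⟨_, rfl⟩)
    · have he : Dvec σ ε p q = 0 := by
        funext m
        have h2 : ((σ.symm m : Fin n) : ℕ) ≠ q := fun h => hq (h ▸ (σ.symm m).isLt)
        simp [Dvec, h1 m, h2]
      exact Or.inl he

lemma Admissible.decomp {n : ℕ} {r : Fin n → ℤ} (h : Admissible r) :
    ∃ a b : Fin n → ℤ, Simple a ∧ Simple b ∧ r = a + b := by
  obtain ⟨l, hl, σ, ε, hε, hr⟩ := h
  have hε2 : ε * ε = 1 := by rcases hε with rfl | rfl <;> norm_num
  have hrm : ∀ m, r m = ε * l.getD ((σ.symm m : Fin n) : ℕ) 0 := by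
    intro m
    have h2 := hr (σ.symm m)
    rw [Equiv.apply_symm_apply] at h2
    calc r m = ε * ε * r m := by rw [hε2, one_mul]
      _ = ε * (ε * r m) := by ring
      _ = _ := by rw [h2]
  simp only [patterns, List.mem_cons, List.not_mem_nil, or_false] at hl
  rcases hl with rfl | rfl | rfl | rfl | rfl | rfl | rfl | rfl | rfl
  · refine ⟨Evec σ ε 0, 0, simple_Evec σ hε 0, Or.inl rfl, funext fun m => ?_⟩
    rw [hrm m]
    simp only [Evec, Pi.add_apply, Pi.zero_apply, add_zero]
    congr 1
    rcases ((σ.symm m : Fin n) : ℕ) with _ | j <;> simp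
  · refine ⟨Evec σ ε 0, Evec σ ε 0, simple_Evec σ hε 0, simple_Evec σ hε 0,
      funext fun m => ?_⟩
    rw [hrm m]
    simp only [Evec, Pi.add_apply, ← mul_add]
    congr 1
    rcases ((σ.symm m : Fin n) : ℕ) with _ | j <;> simp
  · refine ⟨Evec σ ε 0, Evec σ ε 1, simple_Evec σ hε 0, simple_Evec σ hε 1,
      funext fun m => ?_⟩
    rw [hrm m]
    simp only [Evec, Pi.add_apply, ← mul_add]
    congr 1
    rcases ((σ.symm m : Fin n) : ℕ) with _ | _ | j <;> simp
  · refine ⟨Dvec σ ε 0 1, 0, simple_Dvec σ hε (by norm_num), Or.inl rfl,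
      funext fun m => ?_⟩
    rw [hrm m]
    simp only [Dvec, Pi.add_apply, Pi.zero_apply, add_zero]
    congr 1
    rcases ((σ.symm m : Fin n) : ℕ) with _ | _ | j <;> simp
  · refine ⟨Evec σ ε 0, Dvec σ ε 0 1, simple_Evec σ hε 0,
      simple_Dvec σ hε (by norm_num), funext fun m => ?_⟩
    rw [hrm m]
    simp only [Evec, Dvec, Pi.add_apply, ← mul_add]
    congr 1
    rcases ((σ.symm m : Fin n) : ℕ) with _ | _ | j <;> simp
  · refine ⟨Dvec σ ε 0 2, Evec σ ε 1, simple_Dvec σ hε (by norm_num),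
      simple_Evec σ hε 1, funext fun m => ?_⟩
    rw [hrm m]
    simp only [Evec, Dvec, Pi.add_apply, ← mul_add]
    congr 1
    rcases ((σ.symm m : Fin n) : ℕ) with _ | _ | _ | j <;> simp
  · refine ⟨Dvec σ ε 0 1, Dvec σ ε 0 1, simple_Dvec σ hε (by norm_num),
      simple_Dvec σ hε (by norm_num), funext fun m => ?_⟩
    rw [hrm m]
    simp only [Dvec, Pi.add_apply, ← mul_add]
    congr 1
    rcases ((σ.symm m : Fin n) : ℕ) with _ | _ | j <;> simp
  · refine ⟨Dvec σ ε 0 1, Dvec σ ε 0 2, simple_Dvec σ hε (by norm_num),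
      simple_Dvec σ hε (by norm_num), funext fun m => ?_⟩
    rw [hrm m]
    simp only [Dvec, Pi.add_apply, ← mul_add]
    congr 1
    rcases ((σ.symm m : Fin n) : ℕ) with _ | _ | _ | j <;> simp
  · refine ⟨Dvec σ ε 0 2, Dvec σ ε 1 3, simple_Dvec σ hε (by norm_num),
      simple_Dvec σ hε (by norm_num), funext fun m => ?_⟩
    rw [hrm m]
    simp only [Dvec, Pi.add_apply, ← mul_add]
    congr 1
    rcases ((σ.symm m : Fin n) : ℕ) with _ | _ | _ | _ | j <;> simp

/-- If every row of an `n × n` integer matrix is of one of the nine admissible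
types, then `|det X| ≤ 2^n`. -/
theorem stmt9 (n : ℕ) (hn : 1 ≤ n) (X : Matrix (Fin n) (Fin n) ℤ)
    (hX : ∀ i, Admissible (X i)) : |X.det| ≤ 2 ^ n := by
  choose a b ha hb hab using fun i => (hX i).decomp
  have hX' : X = a + b := funext hab
  have key : X.det = ∑ s : Finset (Fin n), (Matrix.of (s.piecewise a b)).det := by
    rw [hX']
    exact (Matrix.detRowAlternating (R := ℤ) (n := Fin n)).toMultilinearMap.map_add_univ a b
  rw [key]
  calc |∑ s : Finset (Fin n), (Matrix.of (s.piecewise a b)).det|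
      ≤ ∑ s : Finset (Fin n), |(Matrix.of (s.piecewise a b)).det| :=
        Finset.abs_sum_le_sum_abs _ _
    _ ≤ ∑ _s : Finset (Fin n), 1 := by
        refine Finset.sum_le_sum fun s _ => tu_det _ _ fun i => ?_
        by_cases hi : i ∈ s
        · have h : (Matrix.of (s.piecewise a b)) i = a i :=
            Finset.piecewise_eq_of_mem _ _ _ hi
          rw [h]; exact ha i
        · have h : (Matrix.of (s.piecewise a b)) i = b i :=
            Finset.piecewise_eq_of_notMem _ _ _ hi
          rw [h]; exact hb i
    _ = 2 ^ n := by
        rw [Finset.sum_const, Finset.card_univ, Fintype.card_finset,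
          Fintype.card_fin]
        simp
end

section
/- If a row vector of admissible type (as in the nine-type classification) has an entry deleted, the resulting shorter vector is again of admissible type (or zero); likewise, adding the deleted entry to any other coordinate preserves admissibility. -/
/-!
Up to permutation and sign, an admissible vector is the same as the multiset of its nonzero
entries, and these multisets (together with the empty one) form a finite list that is closed
under negation, under deleting an element, and under replacing two elements by their sum
(dropped when it vanishes); this is checked by enumeration. Deleting the entry `x_k`, or adding
it to `x_m`, acts on the multiset of all entries in exactly this way.
-/

open Finset

-- The multisets of nonzero entries of admissible vectors; `0` stands for the zero vector.
def admissibleProfiles : List (Multiset ℤ) :=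
  0 :: List.flatMap (fun l : List ℤ => [(l : Multiset ℤ), ((l.map Neg.neg : List ℤ) : Multiset ℤ)])
    patterns

theorem zero_notMem_of_mem_patterns : ∀ l ∈ patterns, (0 : ℤ) ∉ l := by decide

theorem take_mem_admissibleProfiles :
    ∀ l ∈ patterns, ∀ k ≤ l.length, ((l.take k : List ℤ) : Multiset ℤ) ∈ admissibleProfiles := by
  decide

theorem neg_mem_admissibleProfiles :
    ∀ s ∈ admissibleProfiles, s.map Neg.neg ∈ admissibleProfiles := by
  decide

theorem erase_mem_admissibleProfiles :
    ∀ s ∈ admissibleProfiles, ∀ x ∈ s, s.erase x ∈ admissibleProfiles := by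
  decide

set_option maxRecDepth 10000 in
theorem merge_mem_admissibleProfiles :
    ∀ s ∈ admissibleProfiles, ∀ x ∈ s, ∀ y ∈ s.erase x,
      ((x + y) ::ₘ (s.erase x).erase y).filter (· ≠ 0) ∈ admissibleProfiles := by
  decide

theorem filter_map_neg (M : Multiset ℤ) :
    (M.map Neg.neg).filter (· ≠ 0) = (M.filter (· ≠ 0)).map Neg.neg := by
  simp [Multiset.filter_map]

def AdmissibleValues (M : Multiset ℤ) : Prop :=
  M.filter (· ≠ 0) ∈ admissibleProfiles

namespace AdmissibleValues

variable {M : Multiset ℤ}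

theorem neg (h : AdmissibleValues M) : AdmissibleValues (M.map Neg.neg) := by
  rw [AdmissibleValues, filter_map_neg]
  exact neg_mem_admissibleProfiles _ h

theorem of_cons {x : ℤ} (h : AdmissibleValues (x ::ₘ M)) : AdmissibleValues M := by
  unfold AdmissibleValues at *
  by_cases hx : x = 0
  · simpa [hx] using h
  · rw [Multiset.filter_cons_of_pos (p := (· ≠ 0)) _ hx] at h
    simpa using erase_mem_admissibleProfiles _ h x (Multiset.mem_cons_self x _)

theorem merge {x y : ℤ} (h : AdmissibleValues (x ::ₘ y ::ₘ M)) :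
    AdmissibleValues ((x + y) ::ₘ M) := by
  by_cases hx : x = 0
  · simpa [hx, AdmissibleValues] using h
  by_cases hy : y = 0
  · rw [Multiset.cons_swap] at h
    simpa [hy, AdmissibleValues] using h
  unfold AdmissibleValues at *
  rw [Multiset.filter_cons_of_pos (p := (· ≠ 0)) _ hx,
    Multiset.filter_cons_of_pos (p := (· ≠ 0)) _ hy] at h
  have hmerge := merge_mem_admissibleProfiles _ h x (Multiset.mem_cons_self x _) y
    (by simp)
  simpa [Multiset.filter_cons, Multiset.filter_filter] using hmerge

end AdmissibleValues

section Entries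

variable {ι α : Type*} [Fintype ι]

def entries (r : ι → α) : Multiset α := univ.val.map r

theorem entries_comp_perm (r : ι → α) (σ : Equiv.Perm ι) : entries (r ∘ σ) = entries r := by
  rw [entries, entries, ← Multiset.map_map, Multiset.map_univ_val_equiv]

theorem entries_neg [Neg α] (r : ι → α) : entries (-r) = (entries r).map Neg.neg := by
  simp [entries, Multiset.map_map]

omit [Fintype ι] in
theorem map_val_eq_cons_map_erase [DecidableEq ι] {s : Finset ι} {i : ι} (hi : i ∈ s)
    (r : ι → α) : s.val.map r = r i ::ₘ (s.erase i).val.map r := by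
  rw [← Multiset.map_cons, erase_val, Multiset.cons_erase hi]

theorem entries_eq_cons_entries_comp_succAbove {n : ℕ} (r : Fin (n + 1) → α) (k : Fin (n + 1)) :
    entries r = r k ::ₘ entries (r ∘ k.succAbove) := by
  rw [entries, entries, Fin.univ_succAbove n k, cons_val, Multiset.map_cons, map_val,
    Multiset.map_map]
  rfl

theorem entries_comp_succAbove {n : ℕ} (r : Fin (n + 1) → α) (k : Fin (n + 1)) :
    entries (r ∘ k.succAbove) = (univ.erase k).val.map r := by
  rw [← Multiset.cons_inj_right (r k), ← entries_eq_cons_entries_comp_succAbove,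
    ← map_val_eq_cons_map_erase (mem_univ k)]
  rfl

theorem entries_eq_cons_cons {n : ℕ} (r : Fin (n + 1) → α) {k m : Fin (n + 1)} (hmk : m ≠ k) :
    entries r = r m ::ₘ r k ::ₘ ((univ.erase k).erase m).val.map r := by
  rw [entries, map_val_eq_cons_map_erase (mem_univ m),
    map_val_eq_cons_map_erase (mem_erase.2 ⟨hmk.symm, mem_univ k⟩), erase_right_comm]

theorem entries_update_comp_succAbove {n : ℕ} (r : Fin (n + 1) → α) {k m : Fin (n + 1)}
    (hmk : m ≠ k) (a : α) :
    entries (Function.update r m a ∘ k.succAbove) = a ::ₘ ((univ.erase k).erase m).val.map r := by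
  rw [entries_comp_succAbove, map_val_eq_cons_map_erase (mem_erase.2 ⟨hmk, mem_univ m⟩),
    Function.update_self]
  congr 1
  refine Multiset.map_congr rfl fun i hi => Function.update_of_ne ?_ a r
  exact (mem_erase.1 (mem_def.2 hi)).1

theorem exists_perm_of_entries_eq [LinearOrder α] {n : ℕ} {f g : Fin n → α}
    (h : entries f = entries g) : ∃ σ : Equiv.Perm (Fin n), f ∘ σ = g := by
  have hperm : (List.ofFn f).Perm (List.ofFn g) := by
    rw [← Multiset.coe_eq_coe, ← Fin.univ_val_map, ← Fin.univ_val_map]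
    exact h
  have hsorted : f ∘ Tuple.sort f = g ∘ Tuple.sort g :=
    List.ofFn_injective <| List.Perm.eq_of_sortedLE (Tuple.monotone_sort f).sortedLE_ofFn
      (Tuple.monotone_sort g).sortedLE_ofFn <| ((Tuple.sort f).ofFn_comp_perm f).trans
        (hperm.trans ((Tuple.sort g).ofFn_comp_perm g).symm)
  refine ⟨(Tuple.sort g).symm.trans (Tuple.sort f), funext fun j => ?_⟩
  simpa using congrFun hsorted ((Tuple.sort g).symm j)

end Entries

section NonzeroEntries

variable {α : Type*} [Zero α] [DecidableEq α]

theorem Multiset.eq_of_filter_ne_zero_eq {M N : Multiset α}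
    (h : M.filter (· ≠ 0) = N.filter (· ≠ 0)) (hcard : card M = card N) : M = N := by
  have hsplit (P : Multiset α) : P = P.filter (· ≠ 0) + Multiset.replicate (P.count 0) 0 := by
    rw [← Multiset.filter_eq', ← Multiset.filter_add_not (· ≠ 0) P]
    simp [Multiset.filter_filter]
  have hcount : M.count 0 = N.count 0 := by
    have hM := congrArg card (hsplit M)
    have hN := congrArg card (hsplit N)
    simp only [Multiset.card_add, Multiset.card_replicate, h] at hM hN
    omega
  rw [hsplit M, hsplit N, h, hcount]

theorem filter_entries_getD {l : List α} (hl : (0 : α) ∉ l) (n : ℕ) :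
    (entries fun j : Fin n => l.getD j 0).filter (· ≠ 0) = (l.take n : Multiset α) := by
  have hofFn : List.ofFn (fun j : Fin n => l.getD j 0)
      = l.take n ++ List.replicate (n - l.length) 0 := by
    apply List.ext_getElem (by simp; omega)
    intro i h1 h2
    simp only [List.getElem_ofFn]
    by_cases hi : i < l.length
    · rw [List.getElem_append_left (by simp at h1 ⊢; omega), List.getElem_take,
        List.getD_eq_getElem l 0 hi]
    · rw [List.getElem_append_right (by simp at h1 ⊢; omega), List.getElem_replicate,
        List.getD_eq_default l 0 (by omega)]
  rw [entries, Fin.univ_val_map, hofFn, Multiset.filter_coe, List.filter_append,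
    List.filter_eq_self.2, List.filter_eq_nil_iff.2]
  · simp
  · simp +contextual [List.mem_replicate]
  · exact fun a ha => by simpa using ne_of_mem_of_not_mem (List.mem_of_mem_take ha) hl

theorem exists_perm_of_filter_entries_eq [LinearOrder α] {n : ℕ} {r : Fin n → α} {l : List α}
    (hl : (0 : α) ∉ l) (h : (entries r).filter (· ≠ 0) = l) :
    ∃ σ : Equiv.Perm (Fin n), ∀ j, r (σ j) = l.getD j 0 := by
  have hlen : l.length ≤ n := by
    have hcard := Multiset.card_le_card (Multiset.filter_le (· ≠ 0) (entries r))
    rw [h] at hcard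
    simpa [entries] using hcard
  obtain ⟨σ, hσ⟩ := exists_perm_of_entries_eq (f := r) (g := fun j : Fin n => l.getD j 0) <|
    Multiset.eq_of_filter_ne_zero_eq
      (by rw [h, filter_entries_getD hl, List.take_of_length_le hlen]) (by simp [entries])
  exact ⟨σ, congrFun hσ⟩

end NonzeroEntries

theorem admissibleValues_entries {n : ℕ} {r : Fin n → ℤ} (hr : Admissible r) :
    AdmissibleValues (entries r) := by
  have of_pattern {r : Fin n → ℤ} {l : List ℤ} (hl : l ∈ patterns) {σ : Equiv.Perm (Fin n)}
      (h : ∀ j, r (σ j) = l.getD j 0) : AdmissibleValues (entries r) := by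
    -- `l.getD` on `Fin n` only sees `l.take n`: a pattern longer than `n` certifies its truncation.
    rw [AdmissibleValues, ← entries_comp_perm r σ, show r ∘ σ = _ from funext h,
      filter_entries_getD (zero_notMem_of_mem_patterns l hl), List.take_eq_take_min]
    exact take_mem_admissibleProfiles l hl _ (min_le_right _ _)
  obtain ⟨l, hl, σ, ε, rfl | rfl, h⟩ := hr
  · exact of_pattern hl (by simpa using h)
  · simpa [entries_neg, Multiset.map_map, Function.comp_def] using
      (of_pattern (r := -r) hl (by simpa using h)).neg

theorem eq_zero_or_admissible_of_admissibleValues {n : ℕ} {r : Fin n → ℤ}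
    (h : AdmissibleValues (entries r)) : r = 0 ∨ Admissible r := by
  simp only [AdmissibleValues, admissibleProfiles, List.mem_cons, List.mem_flatMap,
    List.not_mem_nil, or_false] at h
  obtain hzero | ⟨l, hl, hpos | hneg⟩ := h
  · left
    funext j
    by_contra hj
    have hmem : r j ∈ (entries r).filter (· ≠ 0) :=
      Multiset.mem_filter.2 ⟨Multiset.mem_map_of_mem r (mem_univ j), hj⟩
    simp [hzero] at hmem
  · obtain ⟨σ, hσ⟩ := exists_perm_of_filter_entries_eq (zero_notMem_of_mem_patterns l hl) hpos
    exact Or.inr ⟨l, hl, σ, 1, Or.inl rfl, by simpa using hσ⟩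
  · have hfilter : (entries (-r)).filter (· ≠ 0) = l := by
      rw [entries_neg, filter_map_neg, hneg, ← Multiset.map_coe, Multiset.map_map]
      simp
    obtain ⟨σ, hσ⟩ := exists_perm_of_filter_entries_eq (zero_notMem_of_mem_patterns l hl) hfilter
    exact Or.inr ⟨l, hl, σ, -1, Or.inr rfl, by simpa using hσ⟩

/-- Deleting an entry from an admissible vector yields an admissible (or zero)
vector; likewise deleting an entry `x_k` and adding it to another coordinate
`x_m` (`m ≠ k`) yields an admissible (or zero) vector. -/
theorem stmt10 (n : ℕ) (r : Fin (n + 1) → ℤ) (hr : Admissible r)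
    (k : Fin (n + 1)) :
    ((fun j : Fin n => r (k.succAbove j)) = 0 ∨
      Admissible (fun j : Fin n => r (k.succAbove j))) ∧
    (∀ m : Fin (n + 1), m ≠ k →
      ((fun j : Fin n => if k.succAbove j = m then r m + r k
          else r (k.succAbove j)) = 0 ∨
        Admissible (fun j : Fin n =>
          if k.succAbove j = m then r m + r k else r (k.succAbove j)))) := by
  have hentries := admissibleValues_entries hr
  refine ⟨eq_zero_or_admissible_of_admissibleValues ?_, fun m hmk => ?_⟩
  · rw [entries_eq_cons_entries_comp_succAbove r k] at hentries
    exact hentries.of_cons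
  · have hmerged : (fun j : Fin n => if k.succAbove j = m then r m + r k
        else r (k.succAbove j)) = Function.update r m (r m + r k) ∘ k.succAbove := by
      funext j
      simp [Function.update_apply]
    rw [hmerged]
    apply eq_zero_or_admissible_of_admissibleValues
    rw [entries_update_comp_succAbove r hmk]
    rw [entries_eq_cons_cons r hmk] at hentries
    exact hentries.merge
end

section
/- For every positive integer p ≤ 2^n there exists an n×n integer matrix c whose rows are all of admissible type (each row being, up to permutation and sign, one of the nine allowed patterns), such that |det c| = p. -/
/-!
`bitMatrix b n` has `2` on the diagonal, `-1` on the subdiagonal, and `-b i` added in the last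
column of row `i`: the paper's upper bidiagonal construction with rows and columns listed in
reverse order. Expanding along the first row, the `(0, 0)` minor is the same matrix for the shifted
sequence `b ∘ succ` and the `(0, n)` minor is triangular with determinant `(-1) ^ n`, so
`det = 2 * det' - b 0` and hence `det = 2 ^ n - ∑ i < n, b i * 2 ^ i`. Taking for `b` the binary
digits of `q = 2 ^ n - p` gives determinant `p`, and for `0/1`-valued `b` each row has nonzero
entries of type `{2}`, `{1}`, `{2, -1}`, `{1, -1}` or `{2, -1, -1}`.
-/

theorem admissible_of_nodup {n : ℕ} {r : Fin n → ℤ} (ps : List (Fin n)) (hps : ps.Nodup)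
    (hl : ps.map r ∈ patterns) (hzero : ∀ j ∉ ps, r j = 0) : Admissible r := by
  have hlen : ps.length ≤ n := by simpa using hps.length_le_card
  obtain ⟨σ, hσ⟩ := Equiv.Perm.exists_extending_pair (Fin.castLE hlen) ps.get
    (Fin.castLE_injective hlen) (List.nodup_iff_injective_get.mp hps)
  refine ⟨ps.map r, hl, σ, 1, Or.inl rfl, fun j => ?_⟩
  rw [one_mul]
  by_cases hj : (j : ℕ) < ps.length
  · rw [List.getD_eq_getElem _ _ (by simpa using hj), List.getElem_map]
    exact congrArg r (hσ ⟨j, hj⟩)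
  · rw [List.getD_eq_default _ _ (by simpa using hj), hzero]
    intro hmem
    obtain ⟨k, hk⟩ := List.get_of_mem hmem
    rw [← hσ, σ.injective.eq_iff] at hk
    exact hj (hk ▸ k.isLt)

def bitMatrix (b : ℕ → ℤ) (n : ℕ) : Matrix (Fin n) (Fin n) ℤ :=
  Matrix.of fun i j => (if j = i then 2 else 0) - (if (j : ℕ) + 1 = i then 1 else 0) -
    (if (j : ℕ) + 1 = n then b i else 0)

theorem bitMatrix_apply (b : ℕ → ℤ) (n : ℕ) (i j : Fin n) : bitMatrix b n i j =
    (if j = i then 2 else 0) - (if (j : ℕ) + 1 = i then 1 else 0) -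
    (if (j : ℕ) + 1 = n then b i else 0) := rfl

theorem bitMatrix_row_admissible {b : ℕ → ℤ} {n : ℕ} (i : Fin n) (hb : b i = 0 ∨ b i = 1) :
    Admissible (bitMatrix b n i) := by
  have hi := i.isLt
  refine admissible_of_nodup (i :: (if (i : ℕ) = 0 then [] else [⟨i - 1, by omega⟩]) ++
    (if b i = 1 ∧ (i : ℕ) + 1 ≠ n then [⟨n - 1, by omega⟩] else [])) ?_ ?_ ?_
  · split_ifs <;> simp [Fin.ext_iff] <;> omega
  · rcases hb with hb | hb <;> split_ifs <;>
      simp [bitMatrix_apply, Fin.ext_iff, patterns, hb] <;> omega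
  · intro j hj
    rcases hb with hb | hb <;> split_ifs at hj <;> simp [Fin.ext_iff] at hj <;>
      simp [bitMatrix_apply, Fin.ext_iff, hb] <;> omega

theorem bitMatrix_submatrix_succ_succ (b : ℕ → ℤ) (n : ℕ) :
    (bitMatrix b (n + 1)).submatrix Fin.succ Fin.succ = bitMatrix (fun i => b (i + 1)) n := by
  ext i j
  simp [bitMatrix_apply]

theorem det_bitMatrix_submatrix_succ_castSucc (b : ℕ → ℤ) (n : ℕ) :
    ((bitMatrix b (n + 1)).submatrix Fin.succ Fin.castSucc).det = (-1) ^ n := by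
  have hupper : ((bitMatrix b (n + 1)).submatrix Fin.succ Fin.castSucc).IsUpperTriangular := by
    intro i j hji
    have : (j : ℕ) < i := hji
    simp [bitMatrix_apply, Fin.ext_iff]
    omega
  have hne : ∀ i : Fin n, (i : ℕ) ≠ n := fun i => i.isLt.ne
  rw [Matrix.det_of_isUpperTriangular hupper]
  simp [bitMatrix_apply, Fin.ext_iff, hne]

theorem det_bitMatrix_succ (b : ℕ → ℤ) (n : ℕ) :
    (bitMatrix b (n + 1)).det = 2 * (bitMatrix (fun i => b (i + 1)) n).det - b 0 := by
  have hrow : bitMatrix b (n + 1) 0 = Pi.single 0 2 - Pi.single (Fin.last n) (b 0) := by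
    ext j
    simp only [bitMatrix_apply, Pi.sub_apply, Pi.single_apply, Fin.ext_iff, Fin.val_zero,
      Fin.val_last, Nat.add_one_ne_zero, if_false, sub_zero, Nat.add_right_cancel_iff]
  rw [Matrix.det_succ_row_zero, hrow]
  simp only [Pi.sub_apply, Pi.single_apply, mul_sub, sub_mul, Finset.sum_sub_distrib, mul_ite,
    ite_mul, mul_zero, zero_mul, Finset.sum_ite_eq', Finset.mem_univ, if_true, Fin.succAbove_zero,
    Fin.succAbove_last, bitMatrix_submatrix_succ_succ, det_bitMatrix_submatrix_succ_castSucc,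
    Fin.val_zero, Fin.val_last]
  have hsign : ((-1 : ℤ) ^ n) * (-1) ^ n = 1 := by rw [← mul_pow]; simp
  linear_combination (-b 0) * hsign

theorem det_bitMatrix (b : ℕ → ℤ) (n : ℕ) :
    (bitMatrix b n).det = 2 ^ n - ∑ i ∈ Finset.range n, b i * 2 ^ i := by
  induction n generalizing b with
  | zero => simp
  | succ n ih =>
    rw [det_bitMatrix_succ, ih, Finset.sum_range_succ']
    simp only [pow_succ, ← mul_assoc, ← Finset.sum_mul]
    ring

theorem sum_range_div_pow_mod_mul_pow (q b n : ℕ) :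
    ∑ i ∈ Finset.range n, q / b ^ i % b * b ^ i = q % b ^ n := by
  induction n with
  | zero => simp [Nat.mod_one]
  | succ n ih => rw [Finset.sum_range_succ, ih, Nat.mod_pow_succ, mul_comm]

/-- For every positive integer `p ≤ 2^n` there is an `n × n` integer matrix all
of whose rows are of admissible type with `|det c| = p`. -/
theorem stmt11 (n p : ℕ) (hp : 0 < p) (hpn : p ≤ 2 ^ n) :
    ∃ c : Matrix (Fin n) (Fin n) ℤ,
      (∀ i, Admissible (c i)) ∧ c.det.natAbs = p := by
  set q := 2 ^ n - p
  have hq : q % 2 ^ n = q := Nat.mod_eq_of_lt (by omega)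
  refine ⟨bitMatrix (fun i => (q / 2 ^ i % 2 : ℕ)) n, fun i => bitMatrix_row_admissible i ?_, ?_⟩
  · exact_mod_cast Nat.mod_two_eq_zero_or_one _
  · have hsum : ∑ i ∈ Finset.range n, ((q / 2 ^ i % 2 : ℕ) : ℤ) * 2 ^ i = q := by
      exact_mod_cast (sum_range_div_pow_mod_mul_pow q 2 n).trans hq
    rw [det_bitMatrix, hsum, Nat.cast_sub hpn, Nat.cast_pow, Nat.cast_ofNat, sub_sub_cancel]
    exact Int.natAbs_natCast p
end

section
/- Let c be the n×n matrix with diagonal 2, superdiagonal −1, and additionally c_{k,1} = −1 for a single k with 2 ≤ k ≤ n (all other entries as in the bidiagonal matrix). Then det c = 2^n − 2^{n−k}. -/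
/-!
Expand the determinant along the first column, whose only nonzero entries are `a` in row `0`
and the corner entry `c` in row `k`. Deleting row `0` leaves an upper bidiagonal matrix with
diagonal `a`. Deleting row `k` leaves a matrix that is block diagonal, with a lower bidiagonal
block of size `k` (diagonal `b`) and an upper bidiagonal block (diagonal `a`). Hence
`det = a ^ n + (-1) ^ k * c * b ^ k * a ^ (n - 1 - k)`, which is `2 ^ n - 2 ^ (n - 1 - k)`
for `a = 2`, `b = c = -1`.
-/

open Finset Function

theorem Fin.val_succAbove {m : ℕ} (p : Fin (m + 1)) (i : Fin m) :
    (p.succAbove i : ℕ) = if (i : ℕ) < p then (i : ℕ) else (i : ℕ) + 1 := by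
  split_ifs with h
  · rw [succAbove_of_castSucc_lt _ _ h, val_castSucc]
  · rw [succAbove_of_le_castSucc _ _ (not_lt.1 h), val_succ]

theorem Fin.prod_ite_val_lt {M : Type*} [CommMonoid M] {m k : ℕ} (hk : k ≤ m) (b a : M) :
    ∏ i : Fin m, (if (i : ℕ) < k then b else a) = b ^ k * a ^ (m - k) := by
  rw [prod_univ_eq_prod_range (fun i => if i < k then b else a), ← prod_range_mul_prod_Ico _ hk,
    prod_congr rfl fun i hi => if_pos (mem_range.1 hi),
    prod_congr rfl fun i hi => if_neg (not_lt.2 (mem_Ico.1 hi).1),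
    Finset.prod_const, Finset.prod_const, card_range, Nat.card_Ico]

namespace Matrix

theorem BlockTriangular.det_eq_prod_diag_of_injective {ι α R : Type*} [Fintype ι]
    [DecidableEq ι] [LinearOrder α] [CommRing R] {M : Matrix ι ι R} {b : ι → α}
    (hM : M.BlockTriangular b) (hb : Injective b) : M.det = ∏ i, M i i := by
  classical
  rw [hM.det, prod_image fun i _ j _ h => hb h]
  refine prod_congr rfl fun i _ => ?_
  let : Unique {j // b j = b i} := ⟨⟨⟨i, rfl⟩⟩, fun j => Subtype.ext (hb j.2)⟩
  exact (det_unique _).trans rfl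

variable {R : Type*} [CommRing R] {m : ℕ}

def cornerBidiagonal {n : ℕ} (a b c : R) (k : Fin n) : Matrix (Fin n) (Fin n) R :=
  fun i j => if i = j then a else if (j : ℕ) = i + 1 then b
    else if i = k ∧ (j : ℕ) = 0 then c else 0

variable (a b c : R) (k : Fin (m + 1))

theorem cornerBidiagonal_apply_zero (i : Fin (m + 1)) :
    cornerBidiagonal a b c k i 0 = if i = 0 then a else if i = k then c else 0 := by
  simp [cornerBidiagonal]

theorem cornerBidiagonal_apply_succ (i : Fin (m + 1)) (j : Fin m) :
    cornerBidiagonal a b c k i j.succ =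
      if (i : ℕ) = j + 1 then a else if (j : ℕ) = i then b else 0 := by
  simp only [cornerBidiagonal, Fin.ext_iff, Fin.val_succ, Nat.succ_ne_zero, and_false, if_false]
  grind

theorem det_submatrix_succAbove_zero_cornerBidiagonal :
    ((cornerBidiagonal a b c k).submatrix (Fin.succAbove 0) Fin.succ).det = a ^ m := by
  rw [det_of_isUpperTriangular]
  · simp [cornerBidiagonal_apply_succ]
  · intro i j (hij : (j : ℕ) < i)
    simp only [submatrix_apply, Fin.succAbove_zero, cornerBidiagonal_apply_succ, Fin.val_succ]
    rw [if_neg (by omega), if_neg (by omega)]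

theorem det_submatrix_succAbove_cornerBidiagonal :
    ((cornerBidiagonal a b c k).submatrix k.succAbove Fin.succ).det =
      b ^ (k : ℕ) * a ^ (m - k) := by
  have hk : (k : ℕ) ≤ m := Nat.lt_succ_iff.1 k.isLt
  -- Listing the first `k` indices in reverse order makes this minor upper triangular.
  let order : Fin m → ℤ := fun i => if (i : ℕ) < k then -(i : ℤ) else i
  have horder : Injective order := by
    intro i j hij
    ext
    simp only [order] at hij
    split_ifs at hij <;> omega
  rw [BlockTriangular.det_eq_prod_diag_of_injective (b := order) ?_ horder,
    ← Fin.prod_ite_val_lt hk]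
  · refine prod_congr rfl fun i _ => ?_
    by_cases h : (i : ℕ) < k <;> simp [cornerBidiagonal_apply_succ, Fin.val_succAbove, h]
  · intro i j hij
    simp only [order, submatrix_apply, cornerBidiagonal_apply_succ, Fin.val_succAbove] at hij ⊢
    split_ifs at hij ⊢ <;> first | rfl | omega

theorem det_cornerBidiagonal (hk : k ≠ 0) :
    (cornerBidiagonal a b c k).det =
      a ^ (m + 1) + (-1) ^ (k : ℕ) * c * (b ^ (k : ℕ) * a ^ (m - k)) := by
  rw [det_succ_column_zero, Fintype.sum_eq_add 0 k hk.symm]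
  · rw [det_submatrix_succAbove_zero_cornerBidiagonal, det_submatrix_succAbove_cornerBidiagonal,
      cornerBidiagonal_apply_zero, cornerBidiagonal_apply_zero, if_pos rfl, if_neg hk, if_pos rfl,
      Fin.val_zero, pow_zero]
    ring
  · rintro i ⟨hi0, hik⟩
    simp [cornerBidiagonal_apply_zero, hi0, hik]

end Matrix

theorem stmt13_general (n : ℕ) (k : Fin n) (hk : 1 ≤ (k : ℕ)) :
    Matrix.det (fun i j : Fin n =>
      if i = j then (2 : ℤ)
      else if (j : ℕ) = (i : ℕ) + 1 then -1
      else if i = k ∧ (j : ℕ) = 0 then -1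
      else 0)
      = 2 ^ n - 2 ^ (n - 1 - (k : ℕ)) := by
  obtain ⟨m, rfl⟩ := Nat.exists_eq_add_one_of_ne_zero k.pos.ne'
  change (Matrix.cornerBidiagonal 2 (-1) (-1) k).det = _
  rw [Matrix.det_cornerBidiagonal _ _ _ _ (Fin.pos_iff_ne_zero.1 hk), Nat.add_sub_cancel]
  linear_combination (-2 ^ (m - k) : ℤ) * pow_mul_pow_eq_one (k : ℕ) (neg_one_mul (-1 : ℤ))

/-- The bidiagonal matrix (diagonal `2`, superdiagonal `-1`) with an extra
entry `-1` at position `(k, 1)` for a single row `k` (here `k` is 0-indexed,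
`1 ≤ k ≤ n-1`, corresponding to the paper's `k ∈ {2,…,n}`) has determinant
`2^n − 2^{n−k}` (paper's count), i.e. `2^n - 2^(n-1-k)` in 0-indexed form. -/
theorem stmt13 (n : ℕ) (hn : 2 ≤ n) (k : Fin n) (hk : 1 ≤ (k : ℕ)) :
    Matrix.det (fun i j : Fin n =>
      if i = j then (2 : ℤ)
      else if (j : ℕ) = (i : ℕ) + 1 then -1
      else if i = k ∧ (j : ℕ) = 0 then -1
      else 0)
      = 2 ^ n - 2 ^ (n - 1 - (k : ℕ)) :=
  stmt13_general n k hk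
end

section
/- More generally, let q < 2^n have binary expansion q = Σ_{k=1}^{n} ε_k 2^{n−k} with ε_k ∈ {0,1}, and let c be the bidiagonal matrix (diagonal 2, superdiagonal −1) with the vector (ε_1,...,ε_n) subtracted from its first column. Then det c = 2^n − q. -/
/-!
Expanding the `(n+1) × (n+1)` determinant `D_{n+1}` along its last row leaves only two terms:
the diagonal entry `a` times `D_n`, and the corner entry `-ε n` times a lower triangular minor
with diagonal `b`. Hence `D_{n+1} = a D_n - ε n (-b)^n`, which for `a = 2`,
`b = -1` is Horner's scheme computing `2^n - q` from the binary digits of `q`.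
-/

open Matrix Finset

variable {R : Type*} [CommRing R]

def bidiagSubFirstCol (a b : R) {n : ℕ} (ε : Fin n → R) : Matrix (Fin n) (Fin n) R :=
  fun i j => (if i = j then a else if (j : ℕ) = (i : ℕ) + 1 then b else 0)
    - (if (j : ℕ) = 0 then ε i else 0)

theorem bidiagSubFirstCol_submatrix_castSucc (a b : R) {m : ℕ} (ε : Fin (m + 1) → R) :
    (bidiagSubFirstCol a b ε).submatrix Fin.castSucc Fin.castSucc
      = bidiagSubFirstCol a b (ε ∘ Fin.castSucc) := by
  ext i j
  simp [bidiagSubFirstCol]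

theorem det_bidiagSubFirstCol_submatrix_castSucc_succ (a b : R) {m : ℕ} (ε : Fin (m + 1) → R) :
    ((bidiagSubFirstCol a b ε).submatrix Fin.castSucc Fin.succ).det = b ^ m := by
  rw [det_of_isLowerTriangular]
  · simp [bidiagSubFirstCol, Fin.ext_iff]
  · intro i j hij
    have hlt : (i : ℕ) < j := hij
    have hi : (i : ℕ) ≠ j + 1 := by omega
    simp [bidiagSubFirstCol, Fin.ext_iff, hi, hlt.ne']

theorem det_bidiagSubFirstCol_succ (a b : R) {m : ℕ} (ε : Fin (m + 1) → R) :
    (bidiagSubFirstCol a b ε).det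
      = a * (bidiagSubFirstCol a b (ε ∘ Fin.castSucc)).det - ε (Fin.last m) * (-b) ^ m := by
  have hrow (j : Fin (m + 1)) : bidiagSubFirstCol a b ε (Fin.last m) j
      = (if Fin.last m = j then a else 0) - (if j = 0 then ε (Fin.last m) else 0) := by
    have : (j : ℕ) ≠ m + 1 := by omega
    simp only [bidiagSubFirstCol, Fin.ext_iff, Fin.val_last, Fin.val_zero, this, if_false]
  rw [det_succ_row _ (Fin.last m)]
  simp only [hrow, mul_sub, sub_mul, sum_sub_distrib, mul_ite, ite_mul, mul_zero, zero_mul,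
    sum_ite_eq, sum_ite_eq', mem_univ, if_true]
  rw [Fin.succAbove_last, Fin.succAbove_zero, bidiagSubFirstCol_submatrix_castSucc,
    det_bidiagSubFirstCol_submatrix_castSucc_succ, Fin.val_last, Fin.val_zero, add_zero,
    (Even.add_self m).neg_one_pow, neg_pow]
  ring

theorem det_bidiagSubFirstCol (a b : R) (n : ℕ) (ε : Fin n → R) :
    (bidiagSubFirstCol a b ε).det
      = a ^ n - ∑ i : Fin n, ε i * (-b) ^ (i : ℕ) * a ^ (n - 1 - i) := by
  induction n with
  | zero => simp
  | succ m ih =>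
    rw [det_bidiagSubFirstCol_succ, ih, Fin.sum_univ_castSucc, mul_sub, mul_sum]
    have hsum : ∑ i : Fin m, a * (ε i.castSucc * (-b) ^ (i : ℕ) * a ^ (m - 1 - i))
        = ∑ i : Fin m, ε i.castSucc * (-b) ^ (i : ℕ) * a ^ (m - i) :=
      sum_congr rfl fun i _ => by rw [show m - i = (m - 1 - i) + 1 by omega, pow_succ]; ring
    simp only [Function.comp_apply, Fin.val_castSucc, Fin.val_last, Nat.add_sub_cancel, hsum,
      Nat.sub_self, pow_zero]
    ring

theorem stmt14_general (n : ℕ) (ε : Fin n → ℤ) :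
    Matrix.det (fun i j : Fin n =>
      (if i = j then (2 : ℤ) else if (j : ℕ) = (i : ℕ) + 1 then -1 else 0)
        - (if (j : ℕ) = 0 then ε i else 0))
      = 2 ^ n - ∑ i : Fin n, ε i * 2 ^ (n - 1 - (i : ℕ)) := by
  exact (det_bidiagSubFirstCol (2 : ℤ) (-1) n ε).trans (by simp)

/-- Let `q = Σ ε_i 2^{n-1-i}` with binary digits `ε_i ∈ {0,1}`. Subtracting the
vector `ε` from the first column of the bidiagonal matrix (diagonal `2`,
superdiagonal `-1`) yields a matrix of determinant `2^n - q`. -/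
theorem stmt14 (n : ℕ) (ε : Fin n → ℤ) (hε : ∀ i, ε i = 0 ∨ ε i = 1) :
    Matrix.det (fun i j : Fin n =>
      (if i = j then (2 : ℤ) else if (j : ℕ) = (i : ℕ) + 1 then -1 else 0)
        - (if (j : ℕ) = 0 then ε i else 0))
      = 2 ^ n - ∑ i : Fin n, ε i * 2 ^ (n - 1 - (i : ℕ)) :=
  stmt14_general n ε
end
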